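/- arXiv:2601.20961 — 3 statements merged into one kernel-verified Lean document; each statement's English description precedes it below -/
import Mathlib

section
/- Any finite concept class H of Borel-measurable functions X → {0,1} is agnostically learnable at rate e^{−n}, and this is achieved by empirical risk minimization: for every measurable selection rule A that maps each sample S ∈ (X × {0,1})^n to an element A(S) ∈ H with êr_S(A(S)) = min_{h∈H} êr_S(h), for every probability distribution P on X × {0,1} there exist constants C, c > 0 such that for all n ∈ ℕ, E_{S~P^n}[er_P(A(S))] − min_{h∈H} er_P(h) ≤ C·e^{−c·n}. -/
open MeasureTheory Filter
open scoped ENNReal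

namespace Agn

section Basic

variable {X : Type*} [MeasurableSpace X]

/-- A set is universally measurable: null-measurable w.r.t. every probability measure. -/
def UnivMeasurableSet {α : Type*} [MeasurableSpace α] (s : Set α) : Prop :=
  ∀ μ : Measure α, IsProbabilityMeasure μ → NullMeasurableSet s μ

/-- A function is universally measurable. -/
def UnivMeasurable {α β : Type*} [MeasurableSpace α] [MeasurableSpace β] (f : α → β) : Prop :=
  ∀ μ : Measure α, IsProbabilityMeasure μ → NullMeasurable f μ

/-- Error rate of a classifier under `P`. -/
noncomputable def er (P : Measure (X × Bool)) (h : X → Bool) : ℝ :=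
  (P {p | h p.1 ≠ p.2}).toReal

/-- The best error rate achievable by the class `H`. -/
noncomputable def optErr (P : Measure (X × Bool)) (H : Set (X → Bool)) : ℝ :=
  sInf ((fun h => er P h) '' H)

/-- The i.i.d. sample measure `P^n`. -/
noncomputable def sampleMeasure (P : Measure (X × Bool)) (n : ℕ) :
    Measure (Fin n → X × Bool) :=
  Measure.pi fun _ => P

end Basic

/-- A (candidate) learning algorithm: a function of the sample and the test point. -/
abbrev Alg (X : Type*) := (n : ℕ) → (Fin n → X × Bool) → X → Bool

section Learn

variable {X : Type*} [MeasurableSpace X]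

/-- A learning algorithm: a sequence of universally measurable functions. -/
def IsLearningAlg (f : Alg X) : Prop :=
  ∀ n : ℕ, UnivMeasurable fun p : (Fin n → X × Bool) × X => f n p.1 p.2

/-- Expected error rate of the classifier returned from an i.i.d. sample of size `n`. -/
noncomputable def expErr (P : Measure (X × Bool)) (f : Alg X) (n : ℕ) : ℝ :=
  ∫ S, er P (f n S) ∂ sampleMeasure P n

/-- Expected excess error rate. -/
noncomputable def excess (P : Measure (X × Bool)) (H : Set (X → Bool)) (f : Alg X)
    (n : ℕ) : ℝ :=
  expErr P f n - optErr P H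

/-- `H` is agnostically learnable at rate `R`. -/
def LearnableAtRate (H : Set (X → Bool)) (R : ℕ → ℝ) : Prop :=
  ∃ f : Alg X, IsLearningAlg f ∧
    ∀ P : Measure (X × Bool), IsProbabilityMeasure P →
      ∃ C > (0 : ℝ), ∃ c > (0 : ℝ), ∀ n : ℕ, excess P H f n ≤ C * R ⌈c * (n : ℝ)⌉₊

/-- `H` is not agnostically learnable faster than `R`. -/
def NotLearnableFasterThan (H : Set (X → Bool)) (R : ℕ → ℝ) : Prop :=
  ∃ C > (0 : ℝ), ∃ c > (0 : ℝ), ∀ f : Alg X, IsLearningAlg f →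
    ∃ P : Measure (X × Bool), IsProbabilityMeasure P ∧
      ∃ᶠ n : ℕ in atTop, C * R ⌈c * (n : ℝ)⌉₊ ≤ excess P H f n

/-- `H` is agnostically learnable with optimal rate exactly `e^{-o(n)}`. -/
def OptimalRateNearExp (H : Set (X → Bool)) : Prop :=
  (∀ ψ : ℕ → ℝ, (∀ n, 0 ≤ ψ n) →
      Tendsto (fun n : ℕ => ψ n / (n : ℝ)) atTop (nhds 0) →
      LearnableAtRate H fun n => Real.exp (-ψ n)) ∧
  ∀ f : Alg X, IsLearningAlg f →
    ∃ ψ : ℕ → ℝ, (∀ n, 0 ≤ ψ n) ∧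
      Tendsto (fun n : ℕ => ψ n / (n : ℝ)) atTop (nhds 0) ∧
      ∃ P : Measure (X × Bool), IsProbabilityMeasure P ∧
        ∃ᶠ n in atTop, Real.exp (-ψ n) ≤ excess P H f n

/-- `H` is agnostically learnable with optimal rate exactly `o(n^{-1/2})`. -/
def OptimalRateSuperRoot (H : Set (X → Bool)) : Prop :=
  (∃ f : Alg X, IsLearningAlg f ∧
      ∀ P : Measure (X × Bool), IsProbabilityMeasure P →
        Tendsto (fun n : ℕ => Real.sqrt (n : ℝ) * excess P H f n) atTop (nhds 0)) ∧
  ∀ R : ℕ → ℝ, (∀ n, 0 < R n) →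
    Tendsto (fun n : ℕ => Real.sqrt (n : ℝ) * R n) atTop (nhds 0) →
    ¬ LearnableAtRate H R

/-- `H` requires arbitrarily slow rates for agnostic learning. -/
def RequiresArbitrarilySlowRates (H : Set (X → Bool)) : Prop :=
  (∃ f : Alg X, IsLearningAlg f ∧
      ∀ P : Measure (X × Bool), IsProbabilityMeasure P →
        Filter.limsup (fun n : ℕ => excess P H f n) atTop ≤ 0) ∧
  ∀ R : ℕ → ℝ, (∀ n, 0 < R n) → Tendsto R atTop (nhds 0) →
    NotLearnableFasterThan H R

end Learn

/-- A witness of the image admissible Suslin property. -/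
structure SuslinWitness (X : Type*) [MeasurableSpace X] (H : Set (X → Bool)) where
  Θ : Type
  topΘ : TopologicalSpace Θ
  measΘ : MeasurableSpace Θ
  polish : @PolishSpace Θ topΘ
  borel : @BorelSpace Θ topΘ measΘ
  F : Θ × X → Bool
  measF : @Measurable (Θ × X) Bool (@Prod.instMeasurableSpace Θ X measΘ _) _ F
  range_eq : H = {g | ∃ θ : Θ, g = fun x => F (θ, x)}

/-- The image admissible Suslin property. -/
def ImageAdmissibleSuslin (X : Type*) [MeasurableSpace X] (H : Set (X → Bool)) : Prop :=
  Nonempty (SuslinWitness X H)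

section Trees

variable {X : Type*}

/-- `H` shatters an infinite Littlestone tree. -/
def ShattersInfLittlestoneTree (H : Set (X → Bool)) : Prop :=
  ∃ t : List Bool → X, ∀ y : ℕ → Bool, ∀ n : ℕ, ∃ h ∈ H,
    ∀ k ≤ n, h (t (List.ofFn fun i : Fin k => y i)) = y k

/-- `H` shatters an infinite VCL tree. -/
def ShattersInfVCLTree (H : Set (X → Bool)) : Prop :=
  ∃ t : (k : ℕ) → ((j : Fin k) → Fin (j.1 + 1) → Bool) → Fin (k + 1) → X,
    ∀ y : (k : ℕ) → Fin (k + 1) → Bool, ∀ n : ℕ, ∃ h ∈ H,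
      ∀ k ≤ n, ∀ i : Fin (k + 1), h (t k (fun j => y j.1) i) = y k i

/-- `H` (VC-)shatters some set of `n` points. -/
def Shatters (H : Set (X → Bool)) (n : ℕ) : Prop :=
  ∃ x : Fin n → X, ∀ y : Fin n → Bool, ∃ h ∈ H, ∀ i, h (x i) = y i

end Trees

/-- `log x := ln (max x e)`, the truncated logarithm used throughout. -/
noncomputable def clog (x : ℝ) : ℝ := Real.log (max x (Real.exp 1))

/-- `ε²(n,δ) = (1/n)(d log(n/d) + log(1/δ))`. -/
noncomputable def epsSq (d n : ℕ) (δ : ℝ) : ℝ :=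
  (1 / (n : ℝ)) * ((d : ℝ) * clog ((n : ℝ) / (d : ℝ)) + clog (1 / δ))

section Emp

variable {X : Type*}

/-- Empirical risk on a sample. -/
noncomputable def empErr {n : ℕ} (S : Fin n → X × Bool) (h : X → Bool) : ℝ :=
  (1 / (n : ℝ)) * ∑ i, if h (S i).1 = (S i).2 then 0 else 1

/-- Empirical distance between two classifiers on a sample. -/
noncomputable def empDist {n : ℕ} (S : Fin n → X × Bool) (f g : X → Bool) : ℝ :=
  (1 / (n : ℝ)) * ∑ i, if f (S i).1 = g (S i).1 then 0 else 1

end Emp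

section Mix

variable {X : Type*} [MeasurableSpace X]

/-- The uniform mixture `P̄ = (1/n) ∑ Pᵢ`. -/
noncomputable def mixMeasure {n : ℕ} (P : Fin n → Measure (X × Bool)) : Measure (X × Bool) :=
  (n : ℝ≥0∞)⁻¹ • ∑ i, P i

/-- Population distance `Q({(x,y) : f x ≠ g x})`. -/
noncomputable def popDist (Q : Measure (X × Bool)) (f g : X → Bool) : ℝ :=
  (Q {p | f p.1 ≠ g p.1}).toReal

end Mix

section Partial

variable {X : Type*} [MeasurableSpace X]

/-- Realizable binary classifications of a finite sample by a partial concept class. -/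
def pproj (G : Set (X → Option Bool)) {n : ℕ} (x : Fin n → X) : Set (Fin n → Bool) :=
  {b | ∃ g ∈ G, ∀ i, g (x i) = some (b i)}

/-- The partial class `G` shatters some `n` points. -/
def PShatters (G : Set (X → Option Bool)) (n : ℕ) : Prop :=
  ∃ x : Fin n → X, pproj G x = Set.univ

/-- Universal measurability of a partial concept class. -/
def PUnivMeasurable (G : Set (X → Option Bool)) : Prop :=
  ∀ (n : ℕ) (b : Fin n → Bool), UnivMeasurableSet {x : Fin n → X | b ∈ pproj G x}

/-- The conditional probability `P(Y = y | X = x)` determined by `η`. -/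
noncomputable def condProb (η : X → ℝ) (x : X) (y : Bool) : ℝ :=
  if y then η x else 1 - η x

/-- The Bayes classifier determined by `η`. -/
noncomputable def bayes (η : X → ℝ) : X → Bool := fun x => decide ((1 / 2 : ℝ) ≤ η x)

/-- The marginal distribution of `P` on `X`. -/
noncomputable def marginalX (P : Measure (X × Bool)) : Measure X := P.map Prod.fst

/-- `η` is a (Borel) version of `P(Y = 1 | X = ·)` with values in `[0,1]`. -/
def IsCondDist (P : Measure (X × Bool)) (η : X → ℝ) : Prop :=
  Measurable η ∧ (∀ x, 0 ≤ η x ∧ η x ≤ 1) ∧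
    ∀ s : Set X, MeasurableSet s →
      P (s ×ˢ ({true} : Set Bool)) = ∫⁻ x in s, ENNReal.ofReal (η x) ∂ marginalX P

/-- `P` is Bayes-realizable with respect to the partial concept class `G`. -/
def BayesRealizable (G : Set (X → Option Bool)) (P : Measure (X × Bool)) (η : X → ℝ) : Prop :=
  ∀ n : ℕ, ∀ᵐ x ∂ (Measure.pi fun _ : Fin n => marginalX P),
    ∃ b ∈ pproj G x, ∀ i, (1 / 2 : ℝ) ≤ condProb η (x i) (b i)

end Partial

/-- The Bernoulli measure on `Bool` with success probability `p`. -/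
noncomputable def bern (p : ℝ) : Measure Bool :=
  ENNReal.ofReal p • Measure.dirac true + ENNReal.ofReal (1 - p) • Measure.dirac false

section Labels

variable {X : Type*} [MeasurableSpace X]

/-- The conditional law of the labels given the instances. -/
noncomputable def labelLaw (η : X → ℝ) {n : ℕ} (x : Fin n → X) : Measure (Fin n → Bool) :=
  Measure.pi fun i => bern (η (x i))

end Labels

section FinLab

variable {X : Type*}

/-- Empirical risk of a labeling `f` against realized labels `y`. -/
noncomputable def empErrLab {n : ℕ} (y f : Fin n → Bool) : ℝ :=
  (1 / (n : ℝ)) * ∑ i, if f i = y i then 0 else 1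

/-- Hamming distance (normalized) between two labelings. -/
noncomputable def distLab {n : ℕ} (f g : Fin n → Bool) : ℝ :=
  (1 / (n : ℝ)) * ∑ i, if f i = g i then 0 else 1

/-- Semi-empirical error of a labeling on the length-`t` prefix. -/
noncomputable def semiErrFin (η : X → ℝ) {n : ℕ} (x : Fin n → X) (t : ℕ)
    (f : Fin n → Bool) : ℝ :=
  (1 / (t : ℝ)) * ∑ i : Fin n, if i.1 < t then 1 - condProb η (x i) (f i) else 0

/-- Semi-empirical Bayes error on the length-`t` prefix. -/
noncomputable def semiErrBayesFin (η : X → ℝ) {n : ℕ} (x : Fin n → X) (t : ℕ) : ℝ :=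
  (1 / (t : ℝ)) * ∑ i : Fin n, if i.1 < t then min (η (x i)) (1 - η (x i)) else 0

/-- Normalized disagreement between labelings on the length-`t` prefix. -/
noncomputable def distFin {n : ℕ} (t : ℕ) (f g : Fin n → Bool) : ℝ :=
  (1 / (t : ℝ)) * ∑ i : Fin n, if i.1 < t ∧ f i ≠ g i then 1 else 0

end FinLab

section Seq

variable {X : Type*}

/-- The labeling `g` of the first `n` points is realizable by `G`. -/
def memProj (G : Set (X → Option Bool)) (x : ℕ → X) (n : ℕ) (g : ℕ → Bool) : Prop :=
  ∃ g' ∈ G, ∀ i < n, g' (x i) = some (g i)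

/-- Semi-empirical error of a labeling on the first `t` points. -/
noncomputable def semiErrSeq (η : X → ℝ) (x : ℕ → X) (t : ℕ) (g : ℕ → Bool) : ℝ :=
  (1 / (t : ℝ)) * ∑ i ∈ Finset.range t, (1 - condProb η (x i) (g i))

/-- Semi-empirical Bayes error on the first `t` points. -/
noncomputable def semiErrBayesSeq (η : X → ℝ) (x : ℕ → X) (t : ℕ) : ℝ :=
  (1 / (t : ℝ)) * ∑ i ∈ Finset.range t, min (η (x i)) (1 - η (x i))

/-- Normalized disagreement between two labelings on the first `t` points. -/
noncomputable def distSeq (t : ℕ) (f g : ℕ → Bool) : ℝ :=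
  (1 / (t : ℝ)) * ∑ i ∈ Finset.range t, if f i = g i then 0 else 1

/-- Projection of the `ε`-near-optimal realizable labelings of the first `t` points
to the first `m` coordinates. -/
def projGood (G : Set (X → Option Bool)) (η : X → ℝ) (x : ℕ → X) (ε : ℝ) (t m : ℕ) :
    Set (Fin m → Bool) :=
  {b | ∃ g : ℕ → Bool, memProj G x t g ∧
    semiErrSeq η x t g - semiErrBayesSeq η x t ≤ ε ∧ ∀ j : Fin m, b j = g (j : ℕ)}

end Seq

/-- `Z` is an i.i.d. sequence with common law `P` on the probability space `(Ω, μ)`. -/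
def IsIIDSeq {Ω : Type*} [MeasurableSpace Ω] (μ : Measure Ω) {Y : Type*} [MeasurableSpace Y]
    (P : Measure Y) (Z : ℕ → Ω → Y) : Prop :=
  (∀ i, Measurable (Z i)) ∧
    ∀ n : ℕ, μ.map (fun ω => fun i : Fin n => Z (i : ℕ) ω) = Measure.pi fun _ : Fin n => P

section UGCsec

variable {X : Type*} [MeasurableSpace X]

/-- The uniform deviation of empirical frequencies over the class `H`. -/
noncomputable def ugcDev (H : Set (X → Bool)) (Q : Measure X) {n : ℕ} (x : Fin n → X) : ℝ :=
  sSup ((fun h => |(1 / (n : ℝ)) * (∑ i, if h (x i) = true then (1 : ℝ) else 0) -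
      (Q {z | h z = true}).toReal|) '' H)

/-- The universal Glivenko–Cantelli property. -/
def UGC (H : Set (X → Bool)) : Prop :=
  ∀ Q : Measure X, IsProbabilityMeasure Q →
    Tendsto (fun n : ℕ => ∫ x, ugcDev H Q x ∂ (Measure.pi fun _ : Fin n => Q)) atTop (nhds 0)

/-- `H` is totally bounded in `L₁(Q)`. -/
def TotallyBoundedL1 (H : Set (X → Bool)) (Q : Measure X) : Prop :=
  ∀ ε : ℝ, 0 < ε → ∃ H' : Set (X → Bool), H' ⊆ H ∧ H'.Finite ∧
    ∀ h ∈ H, ∃ h' ∈ H', (Q {x | h' x ≠ h x}).toReal ≤ ε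

end UGCsec

/-!
Fix a minimizer `h₀` of `er P` over `H`. ERM can return a suboptimal `h ∈ H` on a sample only
if `h` has empirical risk at most that of `h₀`; by Hoeffding's inequality, applied to the
difference of the two zero-one losses, this has probability at most `exp (-n Δₕ² / 2)`, where
`Δₕ = er P h - er P h₀ > 0`. Since the excess risk is at most `1`, summing over the finitely many
suboptimal `h` bounds the expected excess risk by `|H| exp (-n Δ² / 2)` with `Δ` the least gap.
-/

section Hoeffding

open ProbabilityTheory

variable {α : Type*} [MeasurableSpace α] (Q : Measure α) [IsProbabilityMeasure Q]

theorem measureReal_pi_sum_sub_integral_ge_le {w : α → ℝ} (hw : Measurable w) {a b : ℝ}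
    (hab : ∀ x, w x ∈ Set.Icc a b) (n : ℕ) {t : ℝ} (ht : 0 ≤ t) :
    (Measure.pi fun _ : Fin n => Q).real {S | n * t ≤ ∑ i, (w (S i) - ∫ x, w x ∂Q)}
      ≤ Real.exp (-(2 * n * t ^ 2 / (b - a) ^ 2)) := by
  have hsubG : ∀ i : Fin n, HasSubgaussianMGF (fun S : Fin n → α => w (S i) - ∫ x, w x ∂Q)
      ((‖b - a‖₊ / 2) ^ 2) (Measure.pi fun _ => Q) := fun i =>
    HasSubgaussianMGF.of_map (X := fun x => w x - ∫ x, w x ∂Q) (Y := fun S : Fin n → α => S i)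
      (measurable_pi_apply i).aemeasurable (by
        rw [(measurePreserving_eval (fun _ => Q) i).map_eq]
        exact hasSubgaussianMGF_of_mem_Icc hw.aemeasurable (ae_of_all _ hab))
  have hindep : iIndepFun (fun i (S : Fin n → α) => w (S i) - ∫ x, w x ∂Q)
      (Measure.pi fun _ => Q) :=
    iIndepFun_pi (X := fun _ x => w x - ∫ x, w x ∂Q) fun _ => (hw.sub_const _).aemeasurable
  refine (HasSubgaussianMGF.measure_sum_ge_le_of_iIndepFun hindep (s := Finset.univ)
    (fun i _ => hsubG i) (by positivity)).trans_eq ?_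
  congr 1
  simp only [Finset.sum_const, Finset.card_univ, Fintype.card_fin, nsmul_eq_mul, NNReal.coe_mul,
    NNReal.coe_natCast, NNReal.coe_pow, NNReal.coe_div, coe_nnnorm, Real.norm_eq_abs,
    NNReal.coe_ofNat, div_pow, sq_abs]
  field_simp

end Hoeffding

section ZeroOneLoss

variable {X : Type*}

noncomputable def zeroOneLoss (h : X → Bool) (p : X × Bool) : ℝ :=
  if h p.1 = p.2 then 0 else 1

theorem empErr_eq_sum_zeroOneLoss {n : ℕ} (S : Fin n → X × Bool) (h : X → Bool) :
    empErr S h = (1 / (n : ℝ)) * ∑ i, zeroOneLoss h (S i) := rfl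

theorem zeroOneLoss_mem_Icc (h : X → Bool) (p : X × Bool) : zeroOneLoss h p ∈ Set.Icc 0 1 := by
  unfold zeroOneLoss
  split_ifs <;> norm_num

theorem zeroOneLoss_eq_indicator (h : X → Bool) :
    zeroOneLoss h = {p | h p.1 ≠ p.2}.indicator 1 := by
  ext p
  by_cases hp : h p.1 = p.2 <;> simp [zeroOneLoss, hp]

theorem sum_zeroOneLoss_le_of_empErr_le {n : ℕ} {S : Fin n → X × Bool} {f g : X → Bool}
    (hS : empErr S f ≤ empErr S g) : ∑ i, zeroOneLoss f (S i) ≤ ∑ i, zeroOneLoss g (S i) := by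
  rcases n.eq_zero_or_pos with rfl | hn
  · simp
  · exact le_of_mul_le_mul_left hS (by positivity)

variable [MeasurableSpace X]

theorem measurableSet_setOf_ne {h : X → Bool} (hh : Measurable h) :
    MeasurableSet {p : X × Bool | h p.1 ≠ p.2} :=
  (measurableSet_eq_fun (hh.comp measurable_fst) measurable_snd).compl

theorem measurable_zeroOneLoss {h : X → Bool} (hh : Measurable h) : Measurable (zeroOneLoss h) := by
  rw [zeroOneLoss_eq_indicator]
  exact measurable_const.indicator (measurableSet_setOf_ne hh)

theorem integrable_zeroOneLoss (P : Measure (X × Bool)) [IsFiniteMeasure P] {h : X → Bool}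
    (hh : Measurable h) : Integrable (zeroOneLoss h) P :=
  Integrable.of_mem_Icc 0 1 (measurable_zeroOneLoss hh).aemeasurable
    (ae_of_all _ (zeroOneLoss_mem_Icc h))

theorem integral_zeroOneLoss (P : Measure (X × Bool)) {h : X → Bool} (hh : Measurable h) :
    ∫ p, zeroOneLoss h p ∂P = er P h := by
  rw [zeroOneLoss_eq_indicator, integral_indicator_one (measurableSet_setOf_ne hh)]
  rfl

theorem measurable_empErr {n : ℕ} {h : X → Bool} (hh : Measurable h) :
    Measurable fun S : Fin n → X × Bool => empErr S h :=
  (Finset.measurable_sum _ fun i _ =>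
    (measurable_zeroOneLoss hh).comp (measurable_pi_apply i)).const_mul _

theorem er_nonneg (P : Measure (X × Bool)) (h : X → Bool) : 0 ≤ er P h :=
  ENNReal.toReal_nonneg

theorem er_le_one (P : Measure (X × Bool)) [IsProbabilityMeasure P] (h : X → Bool) :
    er P h ≤ 1 :=
  measureReal_le_one

theorem optErr_eq_er_of_forall_le (P : Measure (X × Bool)) {H : Set (X → Bool)} {h₀ : X → Bool}
    (h₀H : h₀ ∈ H) (hmin : ∀ h ∈ H, er P h₀ ≤ er P h) : optErr P H = er P h₀ :=
  IsLeast.csInf_eq ⟨⟨h₀, h₀H, rfl⟩, by rintro _ ⟨h, hh, rfl⟩; exact hmin h hh⟩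

end ZeroOneLoss

instance {X : Type*} [MeasurableSpace X] (P : Measure (X × Bool)) [IsProbabilityMeasure P]
    (n : ℕ) : IsProbabilityMeasure (sampleMeasure P n) := by
  unfold sampleMeasure
  infer_instance

theorem measureReal_empErr_le_empErr_le {X : Type*} [MeasurableSpace X] (P : Measure (X × Bool))
    [IsProbabilityMeasure P] {f g : X → Bool} (hf : Measurable f) (hg : Measurable g)
    (hgf : er P g ≤ er P f) (n : ℕ) :
    (sampleMeasure P n).real {S | empErr S f ≤ empErr S g}
      ≤ Real.exp (-(n * (er P f - er P g) ^ 2 / 2)) := by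
  set w := fun p => zeroOneLoss g p - zeroOneLoss f p
  have hw_mem : ∀ p, w p ∈ Set.Icc (-1) 1 := fun p => by
    obtain ⟨hf0, hf1⟩ := zeroOneLoss_mem_Icc f p
    obtain ⟨hg0, hg1⟩ := zeroOneLoss_mem_Icc g p
    exact ⟨by linarith, by linarith⟩
  have hw_int : ∫ p, w p ∂P = er P g - er P f := by
    rw [integral_sub (integrable_zeroOneLoss P hg) (integrable_zeroOneLoss P hf),
      integral_zeroOneLoss P hg, integral_zeroOneLoss P hf]
  have hsub : {S : Fin n → X × Bool | empErr S f ≤ empErr S g}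
      ⊆ {S | n * (er P f - er P g) ≤ ∑ i, (w (S i) - ∫ p, w p ∂P)} := by
    intro S hS
    have := sum_zeroOneLoss_le_of_empErr_le hS
    simp only [Set.mem_ofPred_eq, hw_int, w, Finset.sum_sub_distrib, Finset.sum_const,
      Finset.card_univ, Fintype.card_fin, nsmul_eq_mul]
    linarith
  calc (sampleMeasure P n).real {S | empErr S f ≤ empErr S g}
      ≤ (sampleMeasure P n).real {S | n * (er P f - er P g) ≤ ∑ i, (w (S i) - ∫ p, w p ∂P)} :=
        measureReal_mono hsub
    _ ≤ Real.exp (-(2 * n * (er P f - er P g) ^ 2 / (1 - (-1)) ^ 2)) :=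
        measureReal_pi_sum_sub_integral_ge_le P ((measurable_zeroOneLoss hg).sub
          (measurable_zeroOneLoss hf)) hw_mem n (sub_nonneg.2 hgf)
    _ = Real.exp (-(n * (er P f - er P g) ^ 2 / 2)) := by ring_nf

def ExpDecay (u : ℕ → ℝ) : Prop :=
  ∃ C > (0 : ℝ), ∃ c > (0 : ℝ), ∀ n : ℕ, u n ≤ C * Real.exp (-(c * n))

namespace ExpDecay

theorem mono {u v : ℕ → ℝ} (hv : ExpDecay v) (huv : ∀ n, u n ≤ v n) : ExpDecay u := by
  obtain ⟨C, hC, c, hc, h⟩ := hv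
  exact ⟨C, hC, c, hc, fun n => (huv n).trans (h n)⟩

theorem zero : ExpDecay 0 :=
  ⟨1, one_pos, 1, one_pos, fun _ => by positivity⟩

theorem add {u v : ℕ → ℝ} (hu : ExpDecay u) (hv : ExpDecay v) : ExpDecay (u + v) := by
  obtain ⟨C, hC, c, hc, hu⟩ := hu
  obtain ⟨D, hD, d, hd, hv⟩ := hv
  refine ⟨C + D, by positivity, min c d, lt_min hc hd, fun n => ?_⟩
  calc u n + v n ≤ C * Real.exp (-(c * n)) + D * Real.exp (-(d * n)) := add_le_add (hu n) (hv n)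
    _ ≤ C * Real.exp (-(min c d * n)) + D * Real.exp (-(min c d * n)) := by
      gcongr
      exacts [min_le_left c d, min_le_right c d]
    _ = (C + D) * Real.exp (-(min c d * n)) := by ring

theorem finsetSum {ι : Type*} (s : Finset ι) {u : ι → ℕ → ℝ} (hu : ∀ i ∈ s, ExpDecay (u i)) :
    ExpDecay fun n => ∑ i ∈ s, u i n := by
  simpa only [← Finset.sum_apply] using Finset.sum_induction u ExpDecay (fun _ _ => add) zero hu

theorem exp_neg_mul {a : ℝ} (ha : 0 < a) : ExpDecay fun n => Real.exp (-(n * a)) :=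
  ⟨1, one_pos, a, ha, fun n => by rw [one_mul, mul_comm]⟩

theorem exists_le_exp_neg_ceil {u : ℕ → ℝ} (hu : ExpDecay u) :
    ∃ C > (0 : ℝ), ∃ c > (0 : ℝ), ∀ n : ℕ, u n ≤ C * Real.exp (-(⌈c * n⌉₊ : ℝ)) := by
  obtain ⟨C, hC, c, hc, hu⟩ := hu
  refine ⟨C * Real.exp 1, by positivity, c, hc, fun n => (hu n).trans ?_⟩
  have hceil : (⌈c * n⌉₊ : ℝ) < c * n + 1 := Nat.ceil_lt_add_one (by positivity)
  rw [mul_assoc, ← Real.exp_add]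
  gcongr
  linarith

end ExpDecay

section ERM

variable {X : Type*} [MeasurableSpace X] (P : Measure (X × Bool)) [IsProbabilityMeasure P]

theorem er_sub_le_sum_indicator {H : Finset (X → Bool)} {g h₀ : X → Bool} {n : ℕ}
    (S : Fin n → X × Bool) (hg : g ∈ H) (herm : empErr S g ≤ empErr S h₀) :
    er P g - er P h₀ ≤ ∑ h ∈ H with er P h₀ < er P h,
      {S : Fin n → X × Bool | empErr S h ≤ empErr S h₀}.indicator 1 S := by
  by_cases hbad : er P h₀ < er P g
  · calc er P g - er P h₀ ≤ 1 := by linarith [er_le_one P g, er_nonneg P h₀]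
      _ = {S : Fin n → X × Bool | empErr S g ≤ empErr S h₀}.indicator 1 S :=
        (Set.indicator_of_mem (show S ∈ {S : Fin n → X × Bool | empErr S g ≤ empErr S h₀}
          from herm) 1).symm
      _ ≤ _ := Finset.single_le_sum (f := fun h => {S : Fin n → X × Bool |
          empErr S h ≤ empErr S h₀}.indicator (1 : (Fin n → X × Bool) → ℝ) S)
          (fun _ _ => Set.indicator_nonneg (fun _ _ => zero_le_one) _)
          (Finset.mem_filter.2 ⟨hg, hbad⟩)
  · exact (sub_nonpos.2 (not_lt.1 hbad)).trans
      (Finset.sum_nonneg fun _ _ => Set.indicator_nonneg (fun _ _ => zero_le_one) _)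

theorem expErr_sub_le_sum_measureReal {H : Finset (X → Bool)} (hH : ∀ h ∈ H, Measurable h)
    {h₀ : X → Bool} (hh₀ : Measurable h₀) {A : Alg X} {n : ℕ}
    (hA : ∀ S, A n S ∈ H) (herm : ∀ S, empErr S (A n S) ≤ empErr S h₀) :
    expErr P A n - er P h₀ ≤ ∑ h ∈ H with er P h₀ < er P h,
      (sampleMeasure P n).real {S | empErr S h ≤ empErr S h₀} := by
  have hmeas : ∀ h ∈ {h ∈ H | er P h₀ < er P h},
      MeasurableSet {S : Fin n → X × Bool | empErr S h ≤ empErr S h₀} := fun h hh =>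
    measurableSet_le (measurable_empErr (hH h (Finset.mem_of_mem_filter h hh)))
      (measurable_empErr hh₀)
  by_cases hint : Integrable (fun S => er P (A n S)) (sampleMeasure P n)
  · calc expErr P A n - er P h₀ = ∫ S, (er P (A n S) - er P h₀) ∂sampleMeasure P n := by
          rw [integral_sub hint (integrable_const _), integral_const, probReal_univ, one_smul,
            expErr]
      _ ≤ ∫ S, ∑ h ∈ H with er P h₀ < er P h,
            {S : Fin n → X × Bool | empErr S h ≤ empErr S h₀}.indicator 1 S
            ∂sampleMeasure P n :=
          integral_mono (hint.sub (integrable_const _))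
            (integrable_finsetSum _ fun h hh => (integrable_const 1).indicator (hmeas h hh))
            fun S => er_sub_le_sum_indicator P S (hA S) (herm S)
      _ = _ := by
          rw [integral_finsetSum _ fun h hh => (integrable_const 1).indicator (hmeas h hh)]
          exact Finset.sum_congr rfl fun h hh => integral_indicator_one (hmeas h hh)
  · -- `er ∘ A n` need not be measurable, and then `expErr` is the junk value `0`.
    rw [expErr, integral_undef hint, zero_sub]
    exact (neg_nonpos.2 (er_nonneg P _)).trans (Finset.sum_nonneg fun _ _ => measureReal_nonneg)

theorem expDecay_excess_of_erm {H : Set (X → Bool)} (hne : H.Nonempty)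
    (hfin : H.Finite) (hmeas : ∀ h ∈ H, Measurable h) {A : Alg X}
    (hA : ∀ (n : ℕ) (S : Fin n → X × Bool), A n S ∈ H)
    (herm : ∀ (n : ℕ) (S : Fin n → X × Bool), ∀ h ∈ H, empErr S (A n S) ≤ empErr S h) :
    ExpDecay (excess P H A) := by
  show ExpDecay fun n => expErr P A n - optErr P H
  obtain ⟨h₀, h₀H, hmin⟩ := Set.exists_min_image H (er P) hfin hne
  rw [optErr_eq_er_of_forall_le P h₀H hmin]
  have hH : ∀ h ∈ hfin.toFinset, Measurable h := fun h hh => hmeas h (hfin.mem_toFinset.1 hh)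
  refine (ExpDecay.finsetSum {h ∈ hfin.toFinset | er P h₀ < er P h} fun h hh =>
    ExpDecay.exp_neg_mul (a := (er P h - er P h₀) ^ 2 / 2) ?_).mono fun n => ?_
  · nlinarith [(Finset.mem_filter.1 hh).2]
  · refine (expErr_sub_le_sum_measureReal P hH (hmeas h₀ h₀H)
      (fun S => hfin.mem_toFinset.2 (hA n S)) fun S => herm n S h₀ h₀H).trans
      (Finset.sum_le_sum fun h hh => ?_)
    have hhH := hfin.mem_toFinset.1 (Finset.mem_of_mem_filter h hh)
    rw [← mul_div_assoc]
    exact measureReal_empErr_le_empErr_le P (hmeas h hhH) (hmeas h₀ h₀H) (hmin h hhH) n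

end ERM

section ERMAlgorithm

variable {X : Type*}

theorem exists_forall_empErr_le {u : ℕ → X → Bool} (hu : (Set.range u).Finite) {n : ℕ}
    (S : Fin n → X × Bool) : ∃ k, ∀ j, empErr S (u k) ≤ empErr S (u j) := by
  obtain ⟨_, ⟨k, rfl⟩, hk⟩ :=
    Set.exists_min_image (Set.range u) (empErr S) hu (Set.range_nonempty u)
  exact ⟨k, fun j => hk _ ⟨j, rfl⟩⟩

open Classical in
/-- Breaking ties towards the least index keeps the rule measurable (`Measurable.find`). -/
noncomputable def ermAlg (u : ℕ → X → Bool) (hu : (Set.range u).Finite) : Alg X :=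
  fun _ S => u (Nat.find (exists_forall_empErr_le hu S))

variable {u : ℕ → X → Bool} (hu : (Set.range u).Finite)

theorem ermAlg_mem_range (n : ℕ) (S : Fin n → X × Bool) : ermAlg u hu n S ∈ Set.range u :=
  ⟨_, rfl⟩

theorem empErr_ermAlg_le (n : ℕ) (S : Fin n → X × Bool) (j : ℕ) :
    empErr S (ermAlg u hu n S) ≤ empErr S (u j) := by
  classical
  exact Nat.find_spec (exists_forall_empErr_le hu S) j

theorem isLearningAlg_ermAlg [MeasurableSpace X] (hu_meas : ∀ k, Measurable (u k)) :
    IsLearningAlg (ermAlg u hu) := by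
  classical
  intro n μ _
  refine (Measurable.find (fun k => (hu_meas k).comp measurable_snd) (fun k => ?_)
    fun p : (Fin n → X × Bool) × X => exists_forall_empErr_le hu p.1).nullMeasurable
  simp only [Set.ofPred_forall]
  exact MeasurableSet.iInter fun j => measurableSet_le
    ((measurable_empErr (hu_meas k)).comp measurable_fst)
    ((measurable_empErr (hu_meas j)).comp measurable_fst)

end ERMAlgorithm

theorem finite_class_erm_exponential_general
    {X : Type*} [MeasurableSpace X]
    (H : Set (X → Bool)) (hne : H.Nonempty) (hfin : H.Finite)
    (hmeas : ∀ h ∈ H, Measurable h) :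
    LearnableAtRate H (fun n => Real.exp (-(n : ℝ))) ∧
      ∀ A : Alg X, (∀ n : ℕ, Measurable (A n)) →
        (∀ (n : ℕ) (S : Fin n → X × Bool), A n S ∈ H) →
        (∀ (n : ℕ) (S : Fin n → X × Bool), ∀ h ∈ H, empErr S (A n S) ≤ empErr S h) →
        ∀ P : Measure (X × Bool), IsProbabilityMeasure P →
          ∃ C > (0 : ℝ), ∃ c > (0 : ℝ), ∀ n : ℕ,
            expErr P A n - optErr P H ≤ C * Real.exp (-(c * (n : ℝ))) := by
  refine ⟨?_, fun A _ hA herm P _ => expDecay_excess_of_erm P hne hfin hmeas hA herm⟩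
  obtain ⟨u, rfl⟩ := hfin.countable.exists_eq_range hne
  refine ⟨ermAlg u hfin, isLearningAlg_ermAlg hfin fun k => hmeas _ ⟨k, rfl⟩, fun P _ => ?_⟩
  refine (expDecay_excess_of_erm P hne hfin hmeas (ermAlg_mem_range hfin) ?_)
    |>.exists_le_exp_neg_ceil
  rintro n S _ ⟨j, rfl⟩
  exact empErr_ermAlg_le hfin n S j

/-- Theorem 4.1: any finite concept class is agnostically learnable at rate
`e^{-n}`, and this is achieved by any empirical risk minimization rule. -/
theorem finite_class_erm_exponential
    {X : Type*} [TopologicalSpace X] [PolishSpace X] [MeasurableSpace X] [BorelSpace X]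
    (H : Set (X → Bool)) (hne : H.Nonempty) (hfin : H.Finite)
    (hmeas : ∀ h ∈ H, Measurable h) :
    LearnableAtRate H (fun n => Real.exp (-(n : ℝ))) ∧
      ∀ A : Alg X, (∀ n : ℕ, Measurable (A n)) →
        (∀ (n : ℕ) (S : Fin n → X × Bool), A n S ∈ H) →
        (∀ (n : ℕ) (S : Fin n → X × Bool), ∀ h ∈ H, empErr S (A n S) ≤ empErr S h) →
        ∀ P : Measure (X × Bool), IsProbabilityMeasure P →
          ∃ C > (0 : ℝ), ∃ c > (0 : ℝ), ∀ n : ℕ,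
            expErr P A n - optErr P H ≤ C * Real.exp (-(c * (n : ℝ))) :=
  finite_class_erm_exponential_general H hne hfin hmeas

end Agn
end

section
/- Let γ ∈ (0, 1/5), δ ∈ (0, 1/(8e)], and n ∈ ℕ ∪ {0} satisfy n < (1/(8γ²))·ln(1/(8δ)). Let p_0 = 1/2 − γ and p_1 = 1/2 + γ. Let t* ~ Bernoulli(1/2) and, conditioned on t*, let B_1,…,B_n be conditionally i.i.d. Bernoulli(p_{t*}). Then for any estimator t̂_n : {0,1}^n → {0,1}, possibly randomized using a source of randomness independent of t*, the probability that t̂_n(B_1,…,B_n) ≠ t* is strictly greater than δ. -/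
/-!
Whatever the estimator does on a sample `b`, it errs with probability at least
`min (P₀ {b}) (P₁ {b}) / 2` there (Le Cam's two-point bound), so the total error is at least
`∑ b, min (P₀ {b}) (P₁ {b}) / 2`. By Cauchy–Schwarz this sum dominates half the squared
Bhattacharyya coefficient `(∑ b, √(P₀ {b} P₁ {b}))² = (1 - 4γ²)ⁿ`, and
`(1 - 4γ²)ⁿ ≥ exp (-8nγ²) > 8δ` by the assumption on `n`.
-/

open MeasureTheory Filter
open scoped ENNReal

namespace Agn

theorem bern_singleton (p : ℝ) (x : Bool) :
    bern p {x} = ENNReal.ofReal (if x then p else 1 - p) := by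
  cases x <;> simp [bern]

instance isFiniteMeasure_bern (p : ℝ) : IsFiniteMeasure (bern p) := by
  constructor
  simp [bern, ENNReal.add_lt_top]

noncomputable def piBernMass (p : ℝ) {n : ℕ} (b : Fin n → Bool) : ℝ :=
  ∏ i, if b i then p else 1 - p

section PiBernMass

variable {p : ℝ} {n : ℕ}

theorem piBernMass_nonneg (hp0 : 0 ≤ p) (hp1 : p ≤ 1) (b : Fin n → Bool) :
    0 ≤ piBernMass p b :=
  Finset.prod_nonneg fun i _ => by split <;> linarith

theorem pi_bern_singleton (hp0 : 0 ≤ p) (hp1 : p ≤ 1) (b : Fin n → Bool) :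
    (Measure.pi fun _ : Fin n => bern p) {b} = ENNReal.ofReal (piBernMass p b) := by
  rw [← Set.univ_pi_singleton b, Measure.pi_pi, piBernMass,
    ENNReal.ofReal_prod_of_nonneg fun i _ => by split <;> linarith]
  exact Finset.prod_congr rfl fun i _ => bern_singleton p (b i)

theorem sum_piBernMass (p : ℝ) (n : ℕ) : ∑ b : Fin n → Bool, piBernMass p b = 1 := by
  simp only [piBernMass]
  rw [← Fintype.prod_sum fun (_ : Fin n) (x : Bool) => if x = true then p else 1 - p]
  simp

theorem piBernMass_mul_piBernMass_one_sub (p : ℝ) (b : Fin n → Bool) :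
    piBernMass p b * piBernMass (1 - p) b = (p * (1 - p)) ^ n := by
  calc piBernMass p b * piBernMass (1 - p) b = ∏ _i : Fin n, p * (1 - p) := by
        rw [piBernMass, piBernMass, ← Finset.prod_mul_distrib]
        exact Finset.prod_congr rfl fun i _ => by cases b i <;> simp [mul_comm]
    _ = (p * (1 - p)) ^ n := by simp

end PiBernMass

theorem sq_sum_sqrt_mul_le_sum_min_mul_sum_add {ι : Type*} (s : Finset ι) {f g : ι → ℝ}
    (hf : ∀ i ∈ s, 0 ≤ f i) (hg : ∀ i ∈ s, 0 ≤ g i) :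
    (∑ i ∈ s, √(f i * g i)) ^ 2 ≤ (∑ i ∈ s, min (f i) (g i)) * ∑ i ∈ s, (f i + g i) := by
  have hmin : ∀ i ∈ s, 0 ≤ min (f i) (g i) := fun i hi => le_min (hf i hi) (hg i hi)
  have hmax : ∀ i ∈ s, 0 ≤ max (f i) (g i) := fun i hi => (hf i hi).trans (le_max_left _ _)
  calc (∑ i ∈ s, √(f i * g i)) ^ 2
      = (∑ i ∈ s, √(min (f i) (g i)) * √(max (f i) (g i))) ^ 2 := by
        congr 1
        exact Finset.sum_congr rfl fun i hi => by rw [← Real.sqrt_mul (hmin i hi), min_mul_max]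
    _ ≤ (∑ i ∈ s, √(min (f i) (g i)) ^ 2) * ∑ i ∈ s, √(max (f i) (g i)) ^ 2 :=
        Finset.sum_mul_sq_le_sq_mul_sq _ _ _
    _ = (∑ i ∈ s, min (f i) (g i)) * ∑ i ∈ s, max (f i) (g i) := by
        rw [Finset.sum_congr rfl fun i hi => Real.sq_sqrt (hmin i hi),
          Finset.sum_congr rfl fun i hi => Real.sq_sqrt (hmax i hi)]
    _ ≤ (∑ i ∈ s, min (f i) (g i)) * ∑ i ∈ s, (f i + g i) :=
        mul_le_mul_of_nonneg_left
          (Finset.sum_le_sum fun i hi => max_le_add_of_nonneg (hf i hi) (hg i hi))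
          (Finset.sum_nonneg hmin)

theorem pow_div_two_le_sum_min_piBernMass {p : ℝ} (hp0 : 0 ≤ p) (hp1 : p ≤ 1) (n : ℕ) :
    (4 * p * (1 - p)) ^ n / 2 ≤
      ∑ b : Fin n → Bool, min (piBernMass p b) (piBernMass (1 - p) b) := by
  have hcs := sq_sum_sqrt_mul_le_sum_min_mul_sum_add Finset.univ
    (f := piBernMass p) (g := piBernMass (1 - p))
    (fun b _ => piBernMass_nonneg (n := n) hp0 hp1 b)
    (fun b _ => piBernMass_nonneg (by linarith) (by linarith) b)
  have hbhat : (∑ b : Fin n → Bool, √(piBernMass p b * piBernMass (1 - p) b)) ^ 2 =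
      (4 * p * (1 - p)) ^ n := by
    simp only [piBernMass_mul_piBernMass_one_sub, Finset.sum_const, Finset.card_univ,
      Fintype.card_fun, Fintype.card_bool, Fintype.card_fin, nsmul_eq_mul]
    rw [mul_pow, Real.sq_sqrt (pow_nonneg (mul_nonneg hp0 (sub_nonneg.2 hp1)) n)]
    push_cast
    rw [← pow_mul, mul_comm n 2, pow_mul, ← mul_pow]
    ring
  have hmass : ∑ b : Fin n → Bool, (piBernMass p b + piBernMass (1 - p) b) = 2 := by
    rw [Finset.sum_add_distrib, sum_piBernMass, sum_piBernMass]
    norm_num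
  rw [hbhat, hmass] at hcs
  linarith

theorem min_le_mul_add_mul_of_add_eq_one {a b s t : ℝ≥0∞} (hst : s + t = 1) :
    min a b ≤ s * a + t * b :=
  calc min a b = s * min a b + t * min a b := by rw [← add_mul, hst, one_mul]
    _ ≤ s * a + t * b := by gcongr; exacts [min_le_left a b, min_le_right a b]

theorem measurableSet_estimator_ne {β Ω : Type*} [MeasurableSpace β] [MeasurableSpace Ω]
    {est : β × Ω → Bool} (hest : Measurable est) :
    MeasurableSet {q : (Bool × β) × Ω | est (q.1.2, q.2) ≠ q.1.1} :=
  (measurableSet_eq_fun (hest.comp (measurable_fst.snd.prodMk measurable_snd))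
    measurable_fst.fst).compl

section TwoPoint

variable {β Ω : Type*} [MeasurableSpace β] [Fintype β] [MeasurableSingletonClass β]
  [MeasurableSpace Ω] {P₀ P₁ : Measure β} {ν : Measure Ω} [IsProbabilityMeasure ν]
  {est : β × Ω → Bool}

theorem mixture_prod_estimator_ne (w₀ w₁ : ℝ≥0∞) (hest : Measurable est) :
    ((w₀ • (Measure.dirac false).prod P₀ + w₁ • (Measure.dirac true).prod P₁).prod ν)
        {q : (Bool × β) × Ω | est (q.1.2, q.2) ≠ q.1.1} =
      ∑ b, (ν {ω | est (b, ω) = true} * (w₀ * P₀ {b}) +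
        ν {ω | est (b, ω) = false} * (w₁ * P₁ {b})) := by
  have hslice : Measurable fun x : Bool × β =>
      ν (Prod.mk x ⁻¹' {q : (Bool × β) × Ω | est (q.1.2, q.2) ≠ q.1.1}) :=
    measurable_measure_prodMk_left (measurableSet_estimator_ne hest)
  rw [Measure.prod_apply (measurableSet_estimator_ne hest), lintegral_add_measure,
    lintegral_smul_measure, lintegral_smul_measure, Measure.dirac_prod, Measure.dirac_prod,
    lintegral_map hslice measurable_prodMk_left, lintegral_map hslice measurable_prodMk_left,
    lintegral_fintype, lintegral_fintype, Finset.smul_sum, Finset.smul_sum,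
    ← Finset.sum_add_distrib]
  refine Finset.sum_congr rfl fun b _ => ?_
  simp only [Set.preimage_ofPred_eq, Bool.ne_false_iff, ne_eq, Bool.not_eq_true, smul_eq_mul]
  ring

theorem sum_min_le_mixture_prod_estimator_ne (w₀ w₁ : ℝ≥0∞) (hest : Measurable est) :
    ∑ b, min (w₀ * P₀ {b}) (w₁ * P₁ {b}) ≤
      ((w₀ • (Measure.dirac false).prod P₀ + w₁ • (Measure.dirac true).prod P₁).prod ν)
        {q : (Bool × β) × Ω | est (q.1.2, q.2) ≠ q.1.1} := by
  rw [mixture_prod_estimator_ne w₀ w₁ hest]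
  refine Finset.sum_le_sum fun b _ => min_le_mul_add_mul_of_add_eq_one ?_
  have hmeas : MeasurableSet {ω | est (b, ω) = true} :=
    measurableSet_eq_fun (hest.comp measurable_prodMk_left) measurable_const
  have hcompl : {ω | est (b, ω) = false} = {ω | est (b, ω) = true}ᶜ := by ext; simp
  rw [hcompl, prob_add_prob_compl hmeas]

end TwoPoint

theorem ofReal_pow_div_two_le_sum_min_pi_bern {p : ℝ} (hp0 : 0 ≤ p) (hp1 : p ≤ 1) (n : ℕ) :
    ENNReal.ofReal ((4 * p * (1 - p)) ^ n / 2) ≤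
      ∑ b : Fin n → Bool, min ((Measure.pi fun _ => bern p) {b})
        ((Measure.pi fun _ => bern (1 - p)) {b}) := by
  simp only [pi_bern_singleton hp0 hp1, pi_bern_singleton (sub_nonneg.2 hp1) (by linarith),
    ← ENNReal.ofReal_min]
  rw [← ENNReal.ofReal_sum_of_nonneg fun b _ =>
    le_min (piBernMass_nonneg hp0 hp1 b) (piBernMass_nonneg (by linarith) (by linarith) b)]
  exact ENNReal.ofReal_le_ofReal (pow_div_two_le_sum_min_piBernMass hp0 hp1 n)

theorem exp_neg_two_mul_le_one_sub {x : ℝ} (h0 : 0 ≤ x) (h1 : x ≤ 1 / 2) :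
    Real.exp (-(2 * x)) ≤ 1 - x := by
  have hpos : 0 < 1 - x := by linarith
  rw [← Real.exp_log hpos, Real.exp_le_exp]
  refine le_trans ?_ (Real.one_sub_inv_le_log_of_pos hpos)
  have hinv : (1 - x)⁻¹ ≤ 1 + 2 * x := by
    rw [inv_eq_one_div, div_le_iff₀ hpos]
    nlinarith
  linarith

theorem eight_mul_lt_one_sub_four_mul_sq_pow {γ δ : ℝ} (hγ0 : 0 < γ) (hγ : γ ^ 2 ≤ 1 / 8)
    (hδ0 : 0 < δ) {n : ℕ} (hn : (n : ℝ) < (1 / (8 * γ ^ 2)) * Real.log (1 / (8 * δ))) :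
    8 * δ < (1 - 4 * γ ^ 2) ^ n := by
  rw [one_div_mul_eq_div, lt_div_iff₀ (by positivity)] at hn
  calc 8 * δ = Real.exp (-Real.log (1 / (8 * δ))) := by
        rw [one_div, Real.log_inv, neg_neg, Real.exp_log (by positivity)]
    _ < Real.exp (n * -(2 * (4 * γ ^ 2))) := Real.exp_lt_exp.2 (by linarith)
    _ = Real.exp (-(2 * (4 * γ ^ 2))) ^ n := Real.exp_nat_mul _ n
    _ ≤ (1 - 4 * γ ^ 2) ^ n :=
        pow_le_pow_left₀ (Real.exp_nonneg _)
          (exp_neg_two_mul_le_one_sub (by positivity) (by linarith)) n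

theorem coin_testing_lower_bound_general
    (γ δ : ℝ) (hγ0 : 0 < γ) (hγ : γ < 1 / 5)
    (hδ0 : 0 < δ)
    (n : ℕ) (hn : (n : ℝ) < (1 / (8 * γ ^ 2)) * Real.log (1 / (8 * δ)))
    {Ω : Type*} [MeasurableSpace Ω] (ν : Measure Ω) [IsProbabilityMeasure ν]
    (est : (Fin n → Bool) × Ω → Bool) (hest : Measurable est) :
    δ <
      ((((1 / 2 : ℝ≥0∞) •
            ((Measure.dirac false).prod (Measure.pi fun _ : Fin n => bern (1 / 2 - γ))) +
          (1 / 2 : ℝ≥0∞) •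
            ((Measure.dirac true).prod
              (Measure.pi fun _ : Fin n => bern (1 / 2 + γ)))).prod ν)
        {q : (Bool × (Fin n → Bool)) × Ω | est (q.1.2, q.2) ≠ q.1.1}).toReal := by
  have hp0 : 0 ≤ 1 / 2 - γ := by linarith
  have hp1 : 1 / 2 - γ ≤ 1 := by linarith
  have hbias : 4 * (1 / 2 - γ) * (1 - (1 / 2 - γ)) = 1 - 4 * γ ^ 2 := by ring
  have hδn := eight_mul_lt_one_sub_four_mul_sq_pow hγ0 (by nlinarith) hδ0 hn
  -- makes the mixture, hence the error probability, finite
  have hhalf (μ : Measure (Bool × (Fin n → Bool))) [IsFiniteMeasure μ] :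
      IsFiniteMeasure ((1 / 2 : ℝ≥0∞) • μ) := μ.smul_finite (by simp)
  rw [show 1 / 2 + γ = 1 - (1 / 2 - γ) by ring,
    ← ENNReal.ofReal_lt_iff_lt_toReal hδ0.le (measure_ne_top _ _)]
  calc ENNReal.ofReal δ
      < (1 / 2) * ENNReal.ofReal ((4 * (1 / 2 - γ) * (1 - (1 / 2 - γ))) ^ n / 2) := by
        rw [show (1 / 2 : ℝ≥0∞) = ENNReal.ofReal (1 / 2) by simp,
          ← ENNReal.ofReal_mul (by norm_num), hbias, ENNReal.ofReal_lt_ofReal_iff (by linarith)]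
        linarith
    _ ≤ (1 / 2) * ∑ b : Fin n → Bool, min ((Measure.pi fun _ => bern (1 / 2 - γ)) {b})
          ((Measure.pi fun _ => bern (1 - (1 / 2 - γ))) {b}) := by
        gcongr
        exact ofReal_pow_div_two_le_sum_min_pi_bern hp0 hp1 n
    _ = ∑ b : Fin n → Bool, min ((1 / 2) * (Measure.pi fun _ => bern (1 / 2 - γ)) {b})
          ((1 / 2) * (Measure.pi fun _ => bern (1 - (1 / 2 - γ))) {b}) := by
        simp only [Finset.mul_sum, min_mul_mul_left]
    _ ≤ _ := sum_min_le_mixture_prod_estimator_ne _ _ hest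

/-- Lemma 4.3: lower bound for testing the bias of a coin.  The joint law of
`(t*, B₁, …, B_n)` is the indicated mixture, and any (possibly randomized) estimator errs with
probability greater than `δ`. -/
theorem coin_testing_lower_bound
    (γ δ : ℝ) (hγ0 : 0 < γ) (hγ : γ < 1 / 5)
    (hδ0 : 0 < δ) (hδ : δ ≤ 1 / (8 * Real.exp 1))
    (n : ℕ) (hn : (n : ℝ) < (1 / (8 * γ ^ 2)) * Real.log (1 / (8 * δ)))
    {Ω : Type*} [MeasurableSpace Ω] (ν : Measure Ω) [IsProbabilityMeasure ν]
    (est : (Fin n → Bool) × Ω → Bool) (hest : Measurable est) :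
    δ <
      ((((1 / 2 : ℝ≥0∞) •
            ((Measure.dirac false).prod (Measure.pi fun _ : Fin n => bern (1 / 2 - γ))) +
          (1 / 2 : ℝ≥0∞) •
            ((Measure.dirac true).prod
              (Measure.pi fun _ : Fin n => bern (1 / 2 + γ)))).prod ν)
        {q : (Bool × (Fin n → Bool)) × Ω | est (q.1.2, q.2) ≠ q.1.1}).toReal :=
  coin_testing_lower_bound_general γ δ hγ0 hγ hδ0 n hn ν est hest

end Agn
end

section
/- For any concept class H of Borel-measurable functions X → {0,1} and any probability measure P on X × {0,1}, if H is totally bounded in L1(P_X), where P_X is the marginal of P on X, then there exists a Borel-measurable function h* : X → {0,1} (not necessarily in H) such that inf_{h'∈H} P_X({x : h'(x) ≠ h*(x)}) = 0 and er_P(h*) = inf_{h'∈H} er_P(h'). -/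
open MeasureTheory Filter
open scoped ENNReal

namespace Agn

/-!
Refine a minimizing sequence `g` in `H` by an ultrafilter `𝒰`. Total boundedness makes `g`
Cauchy along `𝒰` for the disagreement pseudometric `d(f, f') = P_X(f ≠ f')`: for every `ε` one of
finitely many `ε`-balls centred in `H` is `𝒰`-large. Centres `c k` of such balls with radii `2⁻ᵏ`
form a sequence in `H` with summable consecutive disagreements, so by the Borel–Cantelli argument
`c k x` is eventually constant for `P_X`-almost every `x`; its eventual value `h*` is measurable and
`d(c k, h*) → 0`. Finally `er` is `1`-Lipschitz for `d`, and `er (c k) → optErr` because `c k` is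
`2⁻ᵏ`-close to `𝒰`-almost all of the minimizing sequence; hence `er h* = optErr`.
-/

open Topology
open scoped NNReal

section Disagreement

variable {X : Type*}

lemma setOf_ne_comm (f g : X → Bool) : {x | f x ≠ g x} = {x | g x ≠ f x} :=
  Set.ext fun _ => ne_comm

variable [MeasurableSpace X]

lemma measure_ne_le_add (μ : Measure X) (f g h : X → Bool) :
    μ {x | f x ≠ h x} ≤ μ {x | f x ≠ g x} + μ {x | g x ≠ h x} := by
  refine (measure_mono fun x hx => ?_).trans (measure_union_le _ _)
  by_cases hfg : f x = g x
  · exact Or.inr (show g x ≠ h x by rwa [← hfg])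
  · exact Or.inl hfg

instance (P : Measure (X × Bool)) [IsFiniteMeasure P] : IsFiniteMeasure (marginalX P) :=
  inferInstanceAs (IsFiniteMeasure (P.map Prod.fst))

lemma er_le_er_add (P : Measure (X × Bool)) [IsFiniteMeasure P] (f g : X → Bool) :
    er P f ≤ er P g + (marginalX P {x | f x ≠ g x}).toReal := by
  have : P {p | f p.1 ≠ p.2} ≤ P {p | g p.1 ≠ p.2} + marginalX P {x | f x ≠ g x} := calc
    P {p | f p.1 ≠ p.2} ≤ P {p | f p.1 ≠ g p.1} + P {p | g p.1 ≠ p.2} :=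
      measure_ne_le_add (X := X × Bool) P (f ∘ Prod.fst) (g ∘ Prod.fst) Prod.snd
    _ ≤ marginalX P {x | f x ≠ g x} + P {p | g p.1 ≠ p.2} :=
      add_le_add_left (Measure.le_map_apply measurable_fst.aemeasurable _) _
    _ = _ := add_comm _ _
  rw [er, er, ← ENNReal.toReal_add (measure_ne_top _ _) (measure_ne_top _ _)]
  exact ENNReal.toReal_mono (by finiteness) this

lemma tendsto_comp_of_tendsto_measure_ne {Q : Measure X} [IsFiniteMeasure Q] {F : (X → Bool) → ℝ}
    (hF : ∀ f g, F f ≤ F g + (Q {x | f x ≠ g x}).toReal) {β : Type*} {l : Filter β}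
    {c : β → X → Bool} {h : X → Bool} (hc : Tendsto (fun b => Q {x | c b x ≠ h x}) l (𝓝 0)) :
    Tendsto (F ∘ c) l (𝓝 (F h)) := by
  have hd : Tendsto (fun b => (Q {x | c b x ≠ h x}).toReal) l (𝓝 0) :=
    (ENNReal.tendsto_toReal ENNReal.zero_ne_top).comp hc
  refine tendsto_iff_dist_tendsto_zero.2 (squeeze_zero (fun _ => dist_nonneg) (fun b => ?_) hd)
  have hch := hF (c b) h
  have hhc := hF h (c b)
  rw [setOf_ne_comm h] at hhc
  rw [Real.dist_eq, abs_sub_le_iff]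
  constructor <;> simp only [Function.comp_apply] <;> linarith

lemma bddBelow_image_er (P : Measure (X × Bool)) (H : Set (X → Bool)) :
    BddBelow ((fun h => er P h) '' H) :=
  ⟨0, by rintro _ ⟨h, -, rfl⟩; exact ENNReal.toReal_nonneg⟩

lemma optErr_le_er {P : Measure (X × Bool)} {H : Set (X → Bool)} {h : X → Bool} (hh : h ∈ H) :
    optErr P H ≤ er P h :=
  csInf_le (bddBelow_image_er P H) ⟨h, hh, rfl⟩

lemma exists_seq_tendsto_optErr (P : Measure (X × Bool)) {H : Set (X → Bool)} (hne : H.Nonempty) :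
    ∃ g : ℕ → X → Bool, (∀ n, g n ∈ H) ∧ Tendsto (fun n => er P (g n)) atTop (𝓝 (optErr P H)) := by
  obtain ⟨u, -, hu, huH⟩ := exists_seq_tendsto_sInf (hne.image _) (bddBelow_image_er P H)
  choose g hgH hgu using huH
  exact ⟨g, hgH, by simpa only [hgu, optErr] using hu⟩

end Disagreement

section EventualLimit

variable {X : Type*}

open scoped Classical in
noncomputable def eventualLimit (u : ℕ → X → Bool) (x : X) : Bool :=
  decide (∀ᶠ k in atTop, u k x = true)

lemma eventualLimit_eq_of_forall_eq_succ {u : ℕ → X → Bool} {x : X} {N : ℕ}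
    (h : ∀ k, u (k + N) x = u (k + N + 1) x) : eventualLimit u x = u N x := by
  have hconst : ∀ k ≥ N, u k x = u N x := by
    intro k hk
    obtain ⟨k, rfl⟩ := Nat.exists_eq_add_of_le' hk
    induction k with
    | zero => simp
    | succ k ih => rw [show k + 1 + N = k + N + 1 by omega, ← h k, ih (by omega)]
  have : (∀ᶠ k in atTop, u k x = true) ↔ u N x = true :=
    ⟨fun he => (he.and (eventually_ge_atTop N)).exists.elim fun k hk => hconst k hk.2 ▸ hk.1,
      fun hN => eventually_atTop.2 ⟨N, fun k hk => (hconst k hk).trans hN⟩⟩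
  simp only [eventualLimit, this, Bool.decide_eq_true]

lemma setOf_ne_eventualLimit_subset (u : ℕ → X → Bool) (N : ℕ) :
    {x | u N x ≠ eventualLimit u x} ⊆ ⋃ k, {x | u (k + N) x ≠ u (k + N + 1) x} := by
  intro x hx
  by_contra hx'
  simp only [Set.mem_iUnion, Set.mem_ofPred_eq, not_exists, not_not] at hx'
  exact hx (eventualLimit_eq_of_forall_eq_succ hx').symm

variable [MeasurableSpace X]

lemma measurable_eventualLimit {u : ℕ → X → Bool} (hu : ∀ k, Measurable (u k)) :
    Measurable (eventualLimit u) := by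
  refine measurable_to_bool ?_
  have : eventualLimit u ⁻¹' {true} = liminf (fun k => u k ⁻¹' {true}) atTop := by
    ext x
    simp [eventualLimit, mem_liminf_iff_eventually_mem]
  rw [this]
  exact MeasurableSet.measurableSet_liminf fun k => hu k (measurableSet_singleton true)

lemma tendsto_measure_ne_eventualLimit (μ : Measure X) {u : ℕ → X → Bool}
    (hu : ∑' k, μ {x | u k x ≠ u (k + 1) x} ≠ ∞) :
    Tendsto (fun N => μ {x | u N x ≠ eventualLimit u x}) atTop (𝓝 0) := by
  refine tendsto_of_tendsto_of_tendsto_of_le_of_le tendsto_const_nhds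
    (ENNReal.tendsto_sum_nat_add _ hu) (fun _ => zero_le) fun N => ?_
  exact (measure_mono (setOf_ne_eventualLimit_subset u N)).trans (measure_iUnion_le _)

end EventualLimit

lemma sInf_image_measure_ne_eq_zero {X : Type*} [MeasurableSpace X] {Q : Measure X}
    {H : Set (X → Bool)} {c : ℕ → X → Bool} (hcH : ∀ k, c k ∈ H) {h : X → Bool}
    (hc : Tendsto (fun k => Q {x | c k x ≠ h x}) atTop (𝓝 0)) :
    sInf ((fun h' => (Q {x | h' x ≠ h x}).toReal) '' H) = 0 := by
  have hnonneg : ∀ a ∈ (fun h' => (Q {x | h' x ≠ h x}).toReal) '' H, 0 ≤ a := by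
    rintro _ ⟨h', -, rfl⟩
    exact ENNReal.toReal_nonneg
  refine le_antisymm (ge_of_tendsto' ((ENNReal.tendsto_toReal ENNReal.zero_ne_top).comp hc)
    fun k => csInf_le ⟨0, hnonneg⟩ ⟨c k, hcH k, rfl⟩) (Real.sInf_nonneg hnonneg)

section TotallyBounded

variable {X : Type*} [MeasurableSpace X] {H : Set (X → Bool)} {Q : Measure X}

lemma TotallyBoundedL1.exists_eventually_measure_ne_le (htb : TotallyBoundedL1 H Q)
    [IsFiniteMeasure Q] {α : Type*} (𝒰 : Ultrafilter α) {g : α → X → Bool} (hg : ∀ a, g a ∈ H)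
    {ε : ℝ≥0} (hε : 0 < ε) : ∃ c ∈ H, ∀ᶠ a in 𝒰, Q {x | c x ≠ g a x} ≤ ε := by
  obtain ⟨H', hH'H, hH'fin, hcover⟩ := htb ε hε
  obtain ⟨c, hc, hcU⟩ := (Ultrafilter.eventually_exists_mem_iff hH'fin).1 <|
    Eventually.of_forall fun a => hcover (g a) (hg a)
  refine ⟨c, hH'H hc, hcU.mono fun a ha => ?_⟩
  exact (ENNReal.toReal_le_toReal (measure_ne_top _ _) ENNReal.coe_ne_top).1 ha

lemma TotallyBoundedL1.exists_seq_summable_tendsto (htb : TotallyBoundedL1 H Q) [IsFiniteMeasure Q]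
    {F : (X → Bool) → ℝ} (hF : ∀ f g, F f ≤ F g + (Q {x | f x ≠ g x}).toReal)
    {α : Type*} (𝒰 : Ultrafilter α) {g : α → X → Bool} (hg : ∀ a, g a ∈ H) {L : ℝ}
    (hgL : Tendsto (F ∘ g) 𝒰 (𝓝 L)) (hL : ∀ h ∈ H, L ≤ F h) :
    ∃ c : ℕ → X → Bool, (∀ k, c k ∈ H) ∧ ∑' k, Q {x | c k x ≠ c (k + 1) x} ≠ ∞ ∧
      Tendsto (F ∘ c) atTop (𝓝 L) := by
  set ε : ℕ → ℝ≥0 := fun k => 2⁻¹ ^ k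
  choose c hcH hc using fun k =>
    htb.exists_eventually_measure_ne_le 𝒰 hg (ε := ε k) (by positivity)
  have hstep (k : ℕ) : Q {x | c k x ≠ c (k + 1) x} ≤ ↑(2 * ε k) := by
    obtain ⟨a, hka, hka'⟩ := ((hc k).and (hc (k + 1))).exists
    calc Q {x | c k x ≠ c (k + 1) x} ≤ Q {x | c k x ≠ g a x} + Q {x | g a x ≠ c (k + 1) x} :=
          measure_ne_le_add Q _ _ _
      _ ≤ ε k + ε (k + 1) := by
          rw [setOf_ne_comm (g a)]
          exact add_le_add hka hka'
      _ ≤ ↑(2 * ε k) := by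
          rw [two_mul, ENNReal.coe_add]
          gcongr
          exact pow_le_pow_of_le_one (by norm_num) (by norm_num) k.le_succ
  have hsum : ∑' k, Q {x | c k x ≠ c (k + 1) x} ≠ ∞ :=
    ne_top_of_le_ne_top (ENNReal.tsum_coe_ne_top_iff_summable.2
      ((NNReal.summable_geometric (by norm_num)).mul_left 2)) (ENNReal.tsum_le_tsum hstep)
  have hclose (k : ℕ) : F (c k) ≤ L + ε k := by
    refine ge_of_tendsto (hgL.add_const _) ((hc k).mono fun a ha => ?_)
    exact (hF (c k) (g a)).trans (add_le_add le_rfl (ENNReal.toReal_mono ENNReal.coe_ne_top ha))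
  have hε : Tendsto (fun k => L + ε k) atTop (𝓝 L) := by
    have := (tendsto_const_nhds (x := L)).add (NNReal.tendsto_coe.2
      (NNReal.tendsto_pow_atTop_nhds_zero_of_lt_one (r := 2⁻¹) (by norm_num)))
    rwa [NNReal.coe_zero, add_zero] at this
  exact ⟨c, hcH, hsum,
    tendsto_of_tendsto_of_tendsto_of_le_of_le tendsto_const_nhds hε (fun k => hL _ (hcH k)) hclose⟩

end TotallyBounded

theorem limit_function_general
    {X : Type*} [MeasurableSpace X]
    (H : Set (X → Bool)) (hne : H.Nonempty) (hmeas : ∀ h ∈ H, Measurable h)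
    (P : Measure (X × Bool)) [IsProbabilityMeasure P]
    (htb : TotallyBoundedL1 H (marginalX P)) :
    ∃ hstar : X → Bool, Measurable hstar ∧
      sInf ((fun h => ((marginalX P) {x | h x ≠ hstar x}).toReal) '' H) = 0 ∧
      er P hstar = optErr P H := by
  obtain ⟨g, hgH, hg⟩ := exists_seq_tendsto_optErr P hne
  obtain ⟨c, hcH, hsum, hc⟩ := htb.exists_seq_summable_tendsto (er_le_er_add P)
    (hyperfilter ℕ) hgH (hg.mono_left (hyperfilter_le_cofinite.trans Nat.cofinite_eq_atTop.le))
    fun _ => optErr_le_er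
  have hlim := tendsto_measure_ne_eventualLimit (marginalX P) hsum
  refine ⟨eventualLimit c, measurable_eventualLimit fun k => hmeas _ (hcH k),
    sInf_image_measure_ne_eq_zero hcH hlim,
    tendsto_nhds_unique (tendsto_comp_of_tendsto_measure_ne (er_le_er_add P) hlim) hc⟩

/-- Lemma 5.10: if `H` is totally bounded in `L₁(P_X)` then the infimum
error over `H` is attained by some measurable function in the `L₁(P_X)`-closure of `H`. -/
theorem limit_function
    {X : Type*} [TopologicalSpace X] [PolishSpace X] [MeasurableSpace X] [BorelSpace X]
    (H : Set (X → Bool)) (hne : H.Nonempty) (hmeas : ∀ h ∈ H, Measurable h)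
    (P : Measure (X × Bool)) [IsProbabilityMeasure P]
    (htb : TotallyBoundedL1 H (marginalX P)) :
    ∃ hstar : X → Bool, Measurable hstar ∧
      sInf ((fun h => ((marginalX P) {x | h x ≠ hstar x}).toReal) '' H) = 0 ∧
      er P hstar = optErr P H :=
  limit_function_general H hne hmeas P htb

end Agn
end
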